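/- arXiv:2409.10634 — 2 statements merged into one kernel-verified Lean document; each statement's English description precedes it below -/
import Mathlib

section
/- A nonempty set A ⊆ F_2^n satisfies ‖1_A‖_A ≤ 1 if and only if A is a coset of a subgroup of F_2^n, in which case ‖1_A‖_A = 1. -/
/-!
Fourier inversion at a point `c ∈ A` gives `1 = 1_A(c) = ∑ₐ f̂(a) χₐ(c) ≤ ∑ₐ |f̂(a)|`,
so `‖1_A‖_A ≥ 1`, with equality iff `f̂(a) χₐ(c) ≥ 0` for every `a`. For a coset `c + W`
this product is `2⁻ⁿ ∑_{w ∈ W} χₐ(w)`, which is `0` or `|W| / 2ⁿ`. Conversely, if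
equality holds then any two points `x, c ∈ A` satisfy `χₐ(x) = χₐ(c)` whenever
`f̂(a) ≠ 0`, so `A ⊆ c + W` for the subgroup `W` annihilated by the spectral support;
and for `x ∈ c + W` inversion gives `1_A(x) = 1_A(c) = 1`.
-/

open Finset
open scoped Classical

noncomputable def chi {n : ℕ} (a x : Fin n → ZMod 2) : ℝ :=
  if ∑ i, a i * x i = (0 : ZMod 2) then 1 else -1

noncomputable def fhat {n : ℕ} (f : (Fin n → ZMod 2) → ℝ) (a : Fin n → ZMod 2) : ℝ :=
  (∑ x, f x * chi a x) / 2 ^ n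

noncomputable def specNorm {n : ℕ} (f : (Fin n → ZMod 2) → ℝ) : ℝ :=
  ∑ a, |fhat f a|

noncomputable def ind {n : ℕ} (A : Set (Fin n → ZMod 2)) : (Fin n → ZMod 2) → ℝ :=
  fun x => if x ∈ A then 1 else 0

/-- `C` is a coset of a subgroup of `𝔽₂ⁿ`. -/
def IsCoset {n : ℕ} (C : Set (Fin n → ZMod 2)) : Prop :=
  ∃ (W : Submodule (ZMod 2) (Fin n → ZMod 2)) (c : Fin n → ZMod 2),
    C = {x | x - c ∈ W}

section Character

variable {n : ℕ}

lemma zmod_two_eq_zero_or_eq_one (u : ZMod 2) : u = 0 ∨ u = 1 := by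
  revert u; decide

lemma ite_add_eq_zero_zmod_two (u v : ZMod 2) :
    (if u + v = 0 then (1 : ℝ) else -1) =
      (if u = 0 then 1 else -1) * (if v = 0 then 1 else -1) := by
  rcases zmod_two_eq_zero_or_eq_one u with rfl | rfl <;>
    rcases zmod_two_eq_zero_or_eq_one v with rfl | rfl <;>
    simp [show (1 : ZMod 2) + 1 = 0 from rfl]

lemma chi_eq_one_or_eq_neg_one (a x : Fin n → ZMod 2) : chi a x = 1 ∨ chi a x = -1 := by
  unfold chi; split_ifs <;> simp

lemma abs_chi (a x : Fin n → ZMod 2) : |chi a x| = 1 := by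
  rcases chi_eq_one_or_eq_neg_one a x with h | h <;> simp [h]

lemma chi_comm (a x : Fin n → ZMod 2) : chi a x = chi x a := by
  simp only [chi, mul_comm]

lemma chi_zero_right (a : Fin n → ZMod 2) : chi a 0 = 1 := by
  simp [chi]

lemma chi_add_right (a x y : Fin n → ZMod 2) : chi a (x + y) = chi a x * chi a y := by
  simp only [chi, Pi.add_apply, mul_add, sum_add_distrib]
  exact ite_add_eq_zero_zmod_two _ _

lemma chi_add_left (a b x : Fin n → ZMod 2) : chi (a + b) x = chi a x * chi b x := by
  simp only [chi_comm _ x, chi_add_right]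

lemma chi_sub_right (a x y : Fin n → ZMod 2) : chi a (x - y) = chi a x * chi a y := by
  rw [ZModModule.sub_eq_add, chi_add_right]

lemma chi_single_left_of_ne_zero {z : Fin n → ZMod 2} {i : Fin n} (hz : z i ≠ 0) :
    chi (Pi.single i 1) z = -1 := by
  simp [chi, Pi.single_apply, hz]

end Character

section Orthogonality

lemma sum_eq_zero_of_add_right_eq_neg {G : Type*} [AddGroup G] [Fintype G] {f : G → ℝ}
    (b : G) (h : ∀ x, f (x + b) = -f x) : ∑ x, f x = 0 := by
  have := Equiv.sum_comp (Equiv.addRight b) f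
  simp only [Equiv.coe_addRight, h, sum_neg_distrib] at this
  linarith

variable {n : ℕ}

lemma sum_chi_left (z : Fin n → ZMod 2) : ∑ a, chi a z = if z = 0 then 2 ^ n else 0 := by
  split_ifs with hz
  · simp [hz, chi_zero_right]
  · obtain ⟨i, hi⟩ : ∃ i, z i ≠ 0 := by simpa [funext_iff] using hz
    refine sum_eq_zero_of_add_right_eq_neg (Pi.single i 1) fun a => ?_
    rw [chi_add_left, chi_single_left_of_ne_zero hi, mul_neg_one]

theorem fhat_inversion (f : (Fin n → ZMod 2) → ℝ) (x : Fin n → ZMod 2) :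
    ∑ a, fhat f a * chi a x = f x := by
  calc ∑ a, fhat f a * chi a x
      = (∑ y, f y * ∑ a, chi a (y - x)) / 2 ^ n := by
        simp only [fhat, div_mul_eq_mul_div, ← sum_div, sum_mul, mul_sum, chi_sub_right,
          mul_assoc]
        rw [sum_comm]
    _ = f x := by
        simp [sum_chi_left, sub_eq_zero]

end Orthogonality

section SpectralNorm

variable {n : ℕ}

lemma fhat_mul_chi_le_abs (f : (Fin n → ZMod 2) → ℝ) (a c : Fin n → ZMod 2) :
    fhat f a * chi a c ≤ |fhat f a| := by
  simpa [abs_mul, abs_chi] using le_abs_self (fhat f a * chi a c)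

lemma sum_fhat_ind_mul_chi {A : Set (Fin n → ZMod 2)} {c : Fin n → ZMod 2} (hc : c ∈ A) :
    ∑ a, fhat (ind A) a * chi a c = 1 := by
  rw [fhat_inversion, ind, if_pos hc]

lemma one_le_specNorm_ind {A : Set (Fin n → ZMod 2)} {c : Fin n → ZMod 2} (hc : c ∈ A) :
    1 ≤ specNorm (ind A) := by
  rw [← sum_fhat_ind_mul_chi hc]
  exact sum_le_sum fun a _ => fhat_mul_chi_le_abs _ a c

lemma specNorm_ind_eq_one_iff {A : Set (Fin n → ZMod 2)} {c : Fin n → ZMod 2} (hc : c ∈ A) :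
    specNorm (ind A) = 1 ↔ ∀ a, 0 ≤ fhat (ind A) a * chi a c := by
  rw [← sum_fhat_ind_mul_chi hc, specNorm, eq_comm,
    sum_eq_sum_iff_of_le fun a _ => fhat_mul_chi_le_abs _ a c]
  refine forall_congr' fun a => ?_
  rw [← abs_eq_self, abs_mul, abs_chi, mul_one, eq_comm]
  simp

end SpectralNorm

section Coset

variable {n : ℕ}

lemma sum_ite_mem_chi_nonneg (W : Submodule (ZMod 2) (Fin n → ZMod 2)) (a : Fin n → ZMod 2) :
    0 ≤ ∑ y, if y ∈ W then chi a y else 0 := by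
  by_cases h : ∀ y ∈ W, chi a y = 1
  · refine sum_nonneg fun y _ => ?_
    split_ifs with hy
    · exact (h y hy).symm ▸ zero_le_one
    · exact le_rfl
  · obtain ⟨w, hw, hχ⟩ : ∃ w ∈ W, chi a w ≠ 1 := by simpa using h
    refine (sum_eq_zero_of_add_right_eq_neg w fun y => ?_).ge
    rw [W.add_mem_iff_left hw, chi_add_right, (chi_eq_one_or_eq_neg_one a w).resolve_left hχ]
    split_ifs <;> ring

lemma fhat_ind_coset_mul_chi (W : Submodule (ZMod 2) (Fin n → ZMod 2)) (a c : Fin n → ZMod 2) :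
    fhat (ind {x | x - c ∈ W}) a * chi a c = (∑ y, if y ∈ W then chi a y else 0) / 2 ^ n := by
  rw [fhat, div_mul_eq_mul_div, sum_mul]
  congr 1
  calc ∑ x, ind {x | x - c ∈ W} x * chi a x * chi a c
      = ∑ x, (fun y => if y ∈ W then chi a y else 0) (x - c) := by
        simp only [ind, Set.mem_ofPred_eq, ite_mul, one_mul, zero_mul, chi_sub_right]
    _ = ∑ y, if y ∈ W then chi a y else 0 :=
        Fintype.sum_equiv (Equiv.subRight c) _ _ fun _ => rfl

lemma specNorm_ind_coset (W : Submodule (ZMod 2) (Fin n → ZMod 2)) (c : Fin n → ZMod 2) :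
    specNorm (ind {x | x - c ∈ W}) = 1 :=
  (specNorm_ind_eq_one_iff (show c ∈ {x | x - c ∈ W} by simp)).2 fun a => by
    rw [fhat_ind_coset_mul_chi]
    exact div_nonneg (sum_ite_mem_chi_nonneg W a) (by positivity)

end Coset

section Annihilator

variable {n : ℕ}

def chiAnnihilator (S : Set (Fin n → ZMod 2)) : Submodule (ZMod 2) (Fin n → ZMod 2) where
  carrier := {y | ∀ a ∈ S, chi a y = 1}
  add_mem' hy hz a ha := by rw [chi_add_right, hy a ha, hz a ha, one_mul]
  zero_mem' a _ := chi_zero_right a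
  smul_mem' r y hy := by
    rcases zmod_two_eq_zero_or_eq_one r with rfl | rfl
    · simpa using fun a _ => chi_zero_right a
    · simpa using hy

lemma mem_chiAnnihilator {S : Set (Fin n → ZMod 2)} {y : Fin n → ZMod 2} :
    y ∈ chiAnnihilator S ↔ ∀ a ∈ S, chi a y = 1 :=
  Iff.rfl

lemma chi_sub_right_eq_one_iff {a x y : Fin n → ZMod 2} :
    chi a (x - y) = 1 ↔ chi a x = chi a y := by
  rw [chi_sub_right]
  rcases chi_eq_one_or_eq_neg_one a x with hx | hx <;>
    rcases chi_eq_one_or_eq_neg_one a y with hy | hy <;> norm_num [hx, hy]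

lemma chi_eq_of_mul_chi_nonneg {g : ℝ} {a x y : Fin n → ZMod 2} (hg : g ≠ 0)
    (hx : 0 ≤ g * chi a x) (hy : 0 ≤ g * chi a y) : chi a x = chi a y := by
  rcases chi_eq_one_or_eq_neg_one a x with h₁ | h₁ <;>
    rcases chi_eq_one_or_eq_neg_one a y with h₂ | h₂ <;>
    simp only [h₁, h₂] at hx hy ⊢ <;>
    first | rfl | exact absurd (by linarith) hg

theorem eq_coset_of_specNorm_ind_eq_one {A : Set (Fin n → ZMod 2)} {c : Fin n → ZMod 2}
    (hc : c ∈ A) (h : specNorm (ind A) = 1) :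
    A = {x | x - c ∈ chiAnnihilator {a | fhat (ind A) a ≠ 0}} := by
  ext x
  simp only [Set.mem_ofPred_eq, mem_chiAnnihilator, chi_sub_right_eq_one_iff]
  refine ⟨fun hx a ha => ?_, fun hχ => ?_⟩
  · exact chi_eq_of_mul_chi_nonneg ha ((specNorm_ind_eq_one_iff hx).1 h a)
      ((specNorm_ind_eq_one_iff hc).1 h a)
  · have : ind A x = 1 := by
      rw [← fhat_inversion (ind A) x, ← sum_fhat_ind_mul_chi hc]
      refine sum_congr rfl fun a _ => ?_
      by_cases ha : fhat (ind A) a = 0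
      · simp [ha]
      · rw [hχ a ha]
    by_contra hxA
    simp [ind, hxA] at this

end Annihilator

theorem stmt3 {n : ℕ} (A : Set (Fin n → ZMod 2)) (hA : A.Nonempty) :
    (specNorm (ind A) ≤ 1 ↔ IsCoset A) ∧
      (IsCoset A → specNorm (ind A) = 1) := by
  have specNorm_of_isCoset : IsCoset A → specNorm (ind A) = 1 := by
    rintro ⟨W, c, rfl⟩
    exact specNorm_ind_coset W c
  obtain ⟨c, hc⟩ := hA
  refine ⟨⟨fun h => ?_, fun h => (specNorm_of_isCoset h).le⟩, specNorm_of_isCoset⟩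
  exact ⟨_, c, eq_coset_of_specNorm_ind_eq_one hc (h.antisymm (one_le_specNorm_ind hc))⟩
end

section
/- Let m > 1 be an integer and η_i := cos((m−i)π/(2m−1)) for i ∈ [m]. Then there exists σ : [m] → ℝ such that (i) ∑_{i=1}^{m} η_i σ(i) = 1, (ii) ∑_{i=1}^{m} η_i^{2k−1} σ(i) = 0 for every 2 ≤ k ≤ m, and (iii) ∑_{i=1}^{m} |σ(i)| ≤ 2m − 1. -/
/-!
Take σ_i = ℓ_i(0) / η_i, where ℓ_i is the Lagrange basis for the nodes η_i². Then
∑ η_i f(η_i²) σ_i = f(0) for every polynomial f of degree < m, which gives (i) and (ii).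
Since 0 lies left of all nodes, ℓ_i(0) has sign (-1)^(i-1), so ∑ |σ_i| is, up to sign,
∑ (-1)^(m-i) σ_i. Writing T_{2m-1}(x) = x q(x²), the extremal values T_{2m-1}(η_i) = (-1)^(m-i)
turn this signed sum into q(0) = (-1)^(m-1) (2m - 1).
-/

open Finset Real Polynomial

namespace Lagrange

variable {F ι : Type*} [Field F] [DecidableEq ι] {s : Finset ι} {v : ι → F}

theorem eval_eq_sum_eval_mul_eval_basis (hvs : Set.InjOn v s) {f : F[X]} (hf : f.degree < #s)
    (x : F) : f.eval x = ∑ i ∈ s, f.eval (v i) * (Lagrange.basis s v i).eval x := by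
  conv_lhs => rw [eq_interpolate hvs hf]
  simp [interpolate_apply, eval_finsetSum]

theorem neg_one_pow_mul_eval_basis_pos [LinearOrder F] [IsStrictOrderedRing F] [LinearOrder ι]
    (hv : StrictMonoOn v s) {x : F} (hx : ∀ j ∈ s, x < v j) {i : ι} (hi : i ∈ s) :
    0 < (-1) ^ #{j ∈ s | j < i} * (Lagrange.basis s v i).eval x := by
  have hcount : #{j ∈ s | j < i} = #{j ∈ s.erase i | j < i} := by
    rw [filter_erase, erase_eq_of_notMem (by simp)]
  have hsign : ((-1 : F) ^ #{j ∈ s.erase i | j < i}) =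
      ∏ j ∈ s.erase i, if j < i then -1 else 1 := by
    rw [prod_ite, prod_const, prod_const_one, mul_one]
  rw [hcount, hsign, Lagrange.basis, eval_prod, ← prod_mul_distrib]
  refine prod_pos fun j hj => ?_
  obtain ⟨hji, hj⟩ := mem_erase.mp hj
  have hxj := hx j hj
  simp only [basisDivisor, eval_mul, eval_C, eval_sub, eval_X]
  split_ifs with hlt
  · have := hv hj hi hlt
    have : 0 < (v i - v j)⁻¹ := inv_pos.mpr (sub_pos.mpr this)
    nlinarith
  · have := hv hi hj (lt_of_le_of_ne (not_lt.mp hlt) (Ne.symm hji))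
    have : (v i - v j)⁻¹ < 0 := inv_lt_zero.mpr (sub_neg.mpr this)
    nlinarith

end Lagrange

section OddChebyshev

variable (R : Type*) [CommRing R]

/-- `T (2 * n + 1) = X * (oddChebyshev n).comp (X ^ 2)` for the Chebyshev polynomials `T` of the
first kind. -/
noncomputable def oddChebyshev : ℕ → R[X]
  | 0 => 1
  | 1 => 4 * X - 3
  | n + 2 => 2 * (2 * X - 1) * oddChebyshev (n + 1) - oddChebyshev n

theorem natDegree_oddChebyshev_le : ∀ n, (oddChebyshev R n).natDegree ≤ n
  | 0 => by simp [oddChebyshev]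
  | 1 => by rw [oddChebyshev]; compute_degree
  | n + 2 => by
    have h₁ := natDegree_oddChebyshev_le (n + 1)
    have h₀ := natDegree_oddChebyshev_le n
    have h₂ : (2 * (2 * X - 1) : R[X]).natDegree ≤ 1 := by compute_degree
    rw [oddChebyshev]
    refine (natDegree_sub_le _ _).trans (max_le ?_ (by omega))
    exact natDegree_mul_le.trans (by omega)

theorem oddChebyshev_eval_zero : ∀ n : ℕ, (oddChebyshev R n).eval 0 = (-1) ^ n * (2 * n + 1)
  | 0 => by simp [oddChebyshev]
  | 1 => by simp [oddChebyshev]; norm_num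
  | n + 2 => by
    rw [oddChebyshev, eval_sub, eval_mul, oddChebyshev_eval_zero (n + 1),
      oddChebyshev_eval_zero n]
    simp only [eval_mul, eval_sub, eval_X, eval_ofNat, eval_one]
    push_cast
    ring

theorem cos_mul_oddChebyshev_eval_cos_sq (θ : ℝ) :
    ∀ n : ℕ, cos θ * (oddChebyshev ℝ n).eval (cos θ ^ 2) = cos ((2 * n + 1) * θ)
  | 0 => by simp [oddChebyshev]
  | 1 => by
    simp only [oddChebyshev, eval_sub, eval_mul, eval_X, eval_ofNat]
    rw [show (2 * ((1 : ℕ) : ℝ) + 1) * θ = 3 * θ by norm_num, cos_three_mul]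
    ring
  | n + 2 => by
    have h₁ := cos_mul_oddChebyshev_eval_cos_sq θ (n + 1)
    have h₀ := cos_mul_oddChebyshev_eval_cos_sq θ n
    have hsum := cos_add_cos ((2 * (n + 2 : ℕ) + 1) * θ) ((2 * n + 1) * θ)
    simp only [oddChebyshev, eval_sub, eval_mul, eval_X, eval_ofNat, eval_one]
    push_cast at h₁ hsum ⊢
    rw [show ((2 * (n + 2) + 1) * θ + (2 * n + 1) * θ) / 2 = (2 * (n + 1) + 1) * θ by ring,
      show ((2 * (n + 2) + 1) * θ - (2 * n + 1) * θ) / 2 = 2 * θ by ring, cos_two_mul] at hsum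
    linear_combination 2 * (2 * cos θ ^ 2 - 1) * h₁ - h₀ - hsum

end OddChebyshev

noncomputable def chebyshevNode (m i : ℕ) : ℝ := cos ((m - i) * π / (2 * m - 1))

section ChebyshevNode

variable {m i : ℕ}

theorem chebyshevNode_angle_mem (hi : i ∈ Icc 1 m) :
    (m - i) * π / (2 * m - 1) ∈ Set.Ico 0 (π / 2) := by
  obtain ⟨hi₁, him⟩ := mem_Icc.mp hi
  have hi₁' : (1 : ℝ) ≤ i := by exact_mod_cast hi₁
  have him' : (i : ℝ) ≤ m := by exact_mod_cast him
  have hpos : (0 : ℝ) < 2 * m - 1 := by linarith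
  constructor
  · exact div_nonneg (mul_nonneg (by linarith) pi_pos.le) hpos.le
  · rw [div_lt_iff₀ hpos]
    nlinarith [pi_pos]

theorem chebyshevNode_pos (hi : i ∈ Icc 1 m) : 0 < chebyshevNode m i := by
  obtain ⟨h₀, h₁⟩ := chebyshevNode_angle_mem hi
  exact cos_pos_of_mem_Ioo ⟨by linarith [pi_pos], h₁⟩

theorem strictMonoOn_chebyshevNode : StrictMonoOn (chebyshevNode m) (Icc 1 m) := by
  intro i hi j hj hij
  obtain ⟨hi₀, hi₁⟩ := chebyshevNode_angle_mem hi
  obtain ⟨hj₀, hj₁⟩ := chebyshevNode_angle_mem hj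
  have hpos : (0 : ℝ) < 2 * m - 1 := by
    have : (1 : ℝ) ≤ m := by exact_mod_cast (mem_Icc.mp hi).1.trans (mem_Icc.mp hi).2
    linarith
  refine strictAntiOn_cos ⟨hj₀, by linarith⟩ ⟨hi₀, by linarith⟩ ?_
  have : (i : ℝ) < j := by exact_mod_cast hij
  gcongr

theorem chebyshevNode_mul_oddChebyshev_eval (hi : i ∈ Icc 1 m) :
    chebyshevNode m i * (oddChebyshev ℝ (m - 1)).eval (chebyshevNode m i ^ 2) =
      (-1) ^ (m - i) := by
  obtain ⟨hi₁, him⟩ := mem_Icc.mp hi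
  rw [chebyshevNode, cos_mul_oddChebyshev_eval_cos_sq, ← cos_nat_mul_pi]
  congr 1
  have hpos : (2 * m - 1 : ℝ) ≠ 0 := by
    have : (1 : ℝ) ≤ m := by exact_mod_cast hi₁.trans him
    linarith
  push_cast [Nat.cast_sub (hi₁.trans him), Nat.cast_sub him]
  field_simp
  ring

end ChebyshevNode

noncomputable def chebyshevWeight (m i : ℕ) : ℝ :=
  (Lagrange.basis (Icc 1 m) (fun j => chebyshevNode m j ^ 2) i).eval 0 / chebyshevNode m i

section ChebyshevWeight

variable {m : ℕ}

theorem strictMonoOn_chebyshevNode_sq :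
    StrictMonoOn (fun j => chebyshevNode m j ^ 2) (Icc 1 m) := fun _ hi _ hj hij =>
  pow_lt_pow_left₀ (strictMonoOn_chebyshevNode hi hj hij) (chebyshevNode_pos hi).le two_ne_zero

theorem sum_chebyshevNode_mul_eval_mul_chebyshevWeight {f : ℝ[X]} (hf : f.natDegree < m) :
    ∑ i ∈ Icc 1 m, chebyshevNode m i * f.eval (chebyshevNode m i ^ 2) * chebyshevWeight m i =
      f.eval 0 := by
  have hdeg : f.degree < #(Icc 1 m) := by
    rw [Nat.card_Icc, Nat.add_sub_cancel]
    exact degree_le_natDegree.trans_lt (by exact_mod_cast hf)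
  rw [Lagrange.eval_eq_sum_eval_mul_eval_basis strictMonoOn_chebyshevNode_sq.injOn hdeg]
  refine sum_congr rfl fun i hi => ?_
  rw [chebyshevWeight, mul_comm (chebyshevNode m i), mul_assoc,
    mul_div_cancel₀ _ (chebyshevNode_pos hi).ne']

theorem abs_chebyshevWeight {i : ℕ} (hi : i ∈ Icc 1 m) :
    |chebyshevWeight m i| = (-1) ^ (i - 1) * chebyshevWeight m i := by
  have hcount : #{j ∈ Icc 1 m | j < i} = i - 1 := by
    have hfilter : {j ∈ Icc 1 m | j < i} = Ico 1 i := by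
      ext j; simp only [mem_filter, mem_Icc, mem_Ico]; grind
    rw [hfilter, Nat.card_Ico]
  have hpos := Lagrange.neg_one_pow_mul_eval_basis_pos strictMonoOn_chebyshevNode_sq
    (fun j hj => pow_pos (chebyshevNode_pos hj) 2) hi
  rw [hcount] at hpos
  have hnonneg : 0 ≤ (-1) ^ (i - 1) * chebyshevWeight m i := by
    rw [chebyshevWeight, ← mul_div_assoc]
    exact div_nonneg hpos.le (chebyshevNode_pos hi).le
  rw [← abs_of_nonneg hnonneg, abs_mul, abs_pow, abs_neg, abs_one, one_pow, one_mul]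

theorem sum_abs_chebyshevWeight (hm : 1 ≤ m) :
    ∑ i ∈ Icc 1 m, |chebyshevWeight m i| = 2 * m - 1 := by
  have hdeg : (oddChebyshev ℝ (m - 1)).natDegree < m :=
    (natDegree_oddChebyshev_le ℝ (m - 1)).trans_lt (by omega)
  calc ∑ i ∈ Icc 1 m, |chebyshevWeight m i|
      = ∑ i ∈ Icc 1 m, (-1) ^ (m - 1) * ((-1) ^ (m - i) * chebyshevWeight m i) := by
        refine sum_congr rfl fun i hi => ?_
        have hi' := mem_Icc.mp hi
        rw [abs_chebyshevWeight hi, ← mul_assoc, ← pow_add,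
          show m - 1 + (m - i) = i - 1 + 2 * (m - i) by omega, pow_add, pow_mul, neg_one_sq,
          one_pow, mul_one]
    _ = (-1) ^ (m - 1) * (oddChebyshev ℝ (m - 1)).eval 0 := by
        rw [← mul_sum, ← sum_chebyshevNode_mul_eval_mul_chebyshevWeight hdeg]
        refine congrArg _ (sum_congr rfl fun i hi => ?_)
        rw [chebyshevNode_mul_oddChebyshev_eval hi]
    _ = 2 * m - 1 := by
        rw [oddChebyshev_eval_zero, ← mul_assoc, ← pow_add, ← two_mul, pow_mul, neg_one_sq,
          one_pow, one_mul, Nat.cast_sub hm]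
        push_cast
        ring

end ChebyshevWeight

theorem stmt6 (m : ℕ) (hm : 1 < m)
    (η : ℕ → ℝ) (hη : ∀ i, η i = Real.cos (((m : ℝ) - i) * Real.pi / (2 * m - 1))) :
    ∃ σ : ℕ → ℝ,
      (∑ i ∈ Finset.Icc 1 m, η i * σ i = 1) ∧
      (∀ k : ℕ, 2 ≤ k → k ≤ m → ∑ i ∈ Finset.Icc 1 m, η i ^ (2 * k - 1) * σ i = 0) ∧
      (∑ i ∈ Finset.Icc 1 m, |σ i| ≤ 2 * (m : ℝ) - 1) := by
  obtain rfl : η = chebyshevNode m := _root_.funext hη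
  refine ⟨chebyshevWeight m, ?_, fun k hk hkm => ?_, (sum_abs_chebyshevWeight hm.le).le⟩
  · simpa using sum_chebyshevNode_mul_eval_mul_chebyshevWeight (f := 1) (by simp; omega)
  · have hmoment := sum_chebyshevNode_mul_eval_mul_chebyshevWeight (m := m) (f := X ^ (k - 1))
      (by rw [natDegree_X_pow]; omega)
    rw [eval_pow, eval_X, zero_pow (by omega)] at hmoment
    rw [← hmoment]
    refine sum_congr rfl fun i _ => ?_
    rw [eval_pow, eval_X, ← pow_mul, ← pow_succ', show 2 * (k - 1) + 1 = 2 * k - 1 by omega]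
end
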